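/- Anisotropic Sobolev–Troisi embedding: Let N > 2 be an integer, Ω ⊆ ℝ^N a rectangular domain (a product of N open intervals), and let α_1, …, α_N be real numbers with α_i ≥ 1. Set α := α_1 + … + α_N and 2*_α := (2N/(N−2))·(α/N). Then there exists a constant C > 0, depending only on N and α, such that for every smooth compactly supported function u : Ω → ℝ one has (∫_Ω |u|^{2*_α} dx)^{1/2*_α} ≤ C · ∏_{i=1}^N (∫_Ω |∂_{x_i}(|u|^{α_i})|² dx)^{1/(2α)}. -/

import Mathlib

open MeasureTheory Set


open scoped ENNReal
open Set Function Finset MeasureTheory Measure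

variable {ι : Type*} [Fintype ι] [DecidableEq ι] {A : ι → Type*} [∀ i, MeasurableSpace (A i)]
  (μ : ∀ i, Measure (A i)) [∀ i, SigmaFinite (μ i)]

theorem gagliardo_aux (hn : 1 < Fintype.card ι)
    (f : ι → (∀ i, A i) → ℝ≥0∞) (hf : ∀ i, Measurable (f i)) (s : Finset ι) :
    ∀ x : ∀ i, A i,
    (∫⋯∫⁻_s, (fun y => ∏ i, ((∫⋯∫⁻_{i}, f i ∂μ) y) ^ ((1:ℝ)/(Fintype.card ι - 1))) ∂μ) x ≤
      ∏ i, ((∫⋯∫⁻_(insert i s), f i ∂μ) x) ^ ((1:ℝ)/(Fintype.card ι - 1)) := by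
  classical
  set p : ℝ := (1:ℝ)/(Fintype.card ι - 1) with hp
  have hn1 : (0:ℝ) < (Fintype.card ι : ℝ) - 1 := by
    have : (1:ℝ) < Fintype.card ι := by exact_mod_cast hn
    linarith
  have hp0 : 0 ≤ p := by positivity
  induction s using Finset.induction with
  | empty => intro x; simp [lmarginal_empty]
  | @insert j s hj ih =>
    intro x
    have hmeas : ∀ i, Measurable (∫⋯∫⁻_{i}, f i ∂μ) := fun i => (hf i).lmarginal μ
    have hg : Measurable (fun y => ∏ i, ((∫⋯∫⁻_{i}, f i ∂μ) y) ^ p) :=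
      Finset.measurable_prod _ fun i _ => (hmeas i).pow_const _
    rw [lmarginal_insert _ hg hj]
    calc ∫⁻ t, (∫⋯∫⁻_s, (fun y => ∏ i, ((∫⋯∫⁻_{i}, f i ∂μ) y) ^ p) ∂μ) (update x j t) ∂μ j
        ≤ ∫⁻ t, ∏ i, ((∫⋯∫⁻_(insert i s), f i ∂μ) (update x j t)) ^ p ∂μ j := by
          exact lintegral_mono fun t => ih (update x j t)
      _ ≤ ∏ i, ((∫⋯∫⁻_(insert i (insert j s)), f i ∂μ) x) ^ p := ?_
    -- split off the factor i = j
    have hjmem : j ∈ (univ : Finset ι) := mem_univ j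
    rw [← Finset.mul_prod_erase (univ : Finset ι) _ hjmem]
    have hconst : ∀ t, ((∫⋯∫⁻_(insert j s), f j ∂μ) (update x j t)) ^ p
        = ((∫⋯∫⁻_(insert j s), f j ∂μ) x) ^ p := by
      intro t
      congr 1
      rw [lmarginal_update_of_mem]
      exact Finset.mem_insert_self j s
    calc ∫⁻ t, ∏ i, ((∫⋯∫⁻_(insert i s), f i ∂μ) (update x j t)) ^ p ∂μ j
        = ∫⁻ t, ((∫⋯∫⁻_(insert j s), f j ∂μ) x) ^ p *
            ∏ i ∈ univ.erase j, ((∫⋯∫⁻_(insert i s), f i ∂μ) (update x j t)) ^ p ∂μ j := by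
          congr 1; ext t
          rw [← Finset.mul_prod_erase (univ : Finset ι) _ hjmem, hconst]
      _ = ((∫⋯∫⁻_(insert j s), f j ∂μ) x) ^ p *
            ∫⁻ t, ∏ i ∈ univ.erase j, ((∫⋯∫⁻_(insert i s), f i ∂μ) (update x j t)) ^ p ∂μ j := by
          rw [lintegral_const_mul]
          exact Finset.measurable_prod _ fun i _ =>
            (((hf i).lmarginal μ).comp (measurable_update x)).pow_const _
      _ ≤ ((∫⋯∫⁻_(insert j s), f j ∂μ) x) ^ p *
            ∏ i ∈ univ.erase j, (∫⁻ t, (∫⋯∫⁻_(insert i s), f i ∂μ) (update x j t) ∂μ j) ^ p := by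
          gcongr
          apply ENNReal.lintegral_prod_norm_pow_le
          · exact fun i _ => (((hf i).lmarginal μ).comp (measurable_update x)).aemeasurable
          · simp only [sum_const, nsmul_eq_mul]
            rw [Finset.card_erase_of_mem hjmem, Finset.card_univ, hp,
              Nat.cast_sub hn.le]
            push_cast
            field_simp
          · exact fun _ _ => hp0
      _ = ((∫⋯∫⁻_(insert j (insert j s)), f j ∂μ) x) ^ p *
            ∏ i ∈ univ.erase j, ((∫⋯∫⁻_(insert i (insert j s)), f i ∂μ) x) ^ p := by
          rw [Finset.insert_idem]
          congr 1
          refine Finset.prod_congr rfl fun i hi => ?_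
          have hij : i ≠ j := (Finset.mem_erase.mp hi).1
          have hjnotmem : j ∉ insert i s := by
            simp only [Finset.mem_insert]
            push_neg
            exact ⟨fun h => hij h.symm, hj⟩
          rw [← lmarginal_insert _ (hf i) hjnotmem, Finset.insert_comm]

/-- Anisotropic Gagliardo lemma. -/
theorem gagliardo (hn : 1 < Fintype.card ι)
    (f : ι → (∀ i, A i) → ℝ≥0∞) (hf : ∀ i, Measurable (f i)) :
    ∫⁻ x, ∏ i, (∫⁻ t, f i (update x i t) ∂μ i) ^ ((1:ℝ)/(Fintype.card ι - 1)) ∂Measure.pi μ ≤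
      ∏ i, (∫⁻ x, f i x ∂Measure.pi μ) ^ ((1:ℝ)/(Fintype.card ι - 1)) := by
  classical
  cases isEmpty_or_nonempty (∀ i, A i) with
  | inl h => simp [lintegral_of_isEmpty]
  | inr h =>
    inhabit ∀ i, A i
    have H := gagliardo_aux μ hn f hf Finset.univ default
    simp only [Finset.insert_eq_self.mpr (Finset.mem_univ _), lmarginal_univ] at H
    refine le_trans (le_of_eq ?_) H
    congr 1; ext x
    refine Finset.prod_congr rfl fun i _ => ?_
    rw [lmarginal_singleton]

section Pointwise

variable {E : Type*} [NormedAddCommGroup E] [NormedSpace ℝ E]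

/-- Chain rule for `|u|^γ` with `γ > 1`. -/
theorem hasFDerivAt_abs_rpow_comp {u : E → ℝ} {y : E} (hu : DifferentiableAt ℝ u y)
    {γ : ℝ} (hγ : 1 < γ) :
    HasFDerivAt (fun z => |u z| ^ γ) ((γ * |u y| ^ (γ - 2) * u y) • fderiv ℝ u y) y :=
  (hasDerivAt_abs_rpow (u y) hγ).comp_hasFDerivAt y hu.hasFDerivAt

theorem fderiv_abs_rpow_apply {u : E → ℝ} {y : E} (hu : DifferentiableAt ℝ u y)
    {γ : ℝ} (hγ : 1 < γ) (e : E) :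
    fderiv ℝ (fun z => |u z| ^ γ) y e = γ * |u y| ^ (γ - 2) * u y * fderiv ℝ u y e := by
  rw [(hasFDerivAt_abs_rpow_comp hu hγ).fderiv]
  simp [smul_smul]

/-- The key pointwise identity:
`∂(|u|^γ) = (γ/α) |u|^(γ-α) ∂(|u|^α)`, valid everywhere when `1 ≤ α < γ`. -/
theorem fderiv_abs_rpow_factor {u : E → ℝ} {y : E} (hu : DifferentiableAt ℝ u y)
    {α γ : ℝ} (hα : 1 ≤ α) (hαγ : α < γ) (e : E) :
    fderiv ℝ (fun z => |u z| ^ γ) y e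
      = γ / α * |u y| ^ (γ - α) * fderiv ℝ (fun z => |u z| ^ α) y e := by
  have hγ : 1 < γ := lt_of_le_of_lt hα hαγ
  have hα0 : (0:ℝ) < α := lt_of_lt_of_le one_pos hα
  rw [fderiv_abs_rpow_apply hu hγ]
  by_cases h0 : u y = 0
  · rw [h0]
    simp [Real.zero_rpow (by linarith : γ - α ≠ 0)]
  have habs : (0:ℝ) < |u y| := abs_pos.mpr h0
  rcases eq_or_lt_of_le hα with hα1 | hα1
  · -- α = 1
    subst hα1
    have hd : HasFDerivAt (fun z => |u z| ^ (1:ℝ))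
        ((SignType.sign (u y) : ℝ) • fderiv ℝ u y) y := by
      have h1 : HasFDerivAt (fun z => |u z|)
          ((SignType.sign (u y) : ℝ) • fderiv ℝ u y) y :=
        (hasDerivAt_abs h0).comp_hasFDerivAt y hu.hasFDerivAt
      apply h1.congr_of_eventuallyEq
      filter_upwards with z
      rw [Real.rpow_one]
    rw [hd.fderiv]
    simp only [ContinuousLinearMap.coe_smul', Pi.smul_apply, smul_eq_mul, div_one]
    have hsgn : (SignType.sign (u y) : ℝ) * |u y| = u y := by
      rcases lt_or_gt_of_ne h0 with h | h
      · simp [h, abs_of_neg h]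
      · simp [h, abs_of_pos h]
    have h2 : |u y| ^ (γ - 2) * u y = |u y| ^ (γ - 1) * (SignType.sign (u y) : ℝ) := by
      have hh : |u y| ^ (γ - 1) = |u y| ^ (γ - 2) * |u y| := by
        rw [show γ - 1 = (γ - 2) + 1 by ring, Real.rpow_add habs, Real.rpow_one]
      rw [hh, mul_assoc, mul_comm (|u y|), hsgn]
    calc γ * |u y| ^ (γ - 2) * u y * (fderiv ℝ u y) e
        = γ * (|u y| ^ (γ - 2) * u y) * (fderiv ℝ u y) e := by ring
      _ = γ * (|u y| ^ (γ - 1) * (SignType.sign (u y) : ℝ)) * (fderiv ℝ u y) e := by rw [h2]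
      _ = γ * |u y| ^ (γ - 1) * ((SignType.sign (u y) : ℝ) * (fderiv ℝ u y) e) := by ring
  · -- α > 1
    rw [fderiv_abs_rpow_apply hu hα1]
    have h2 : |u y| ^ (γ - 2) = |u y| ^ (γ - α) * |u y| ^ (α - 2) := by
      rw [← Real.rpow_add habs]; ring_nf
    rw [h2]
    field_simp


/-- At a zero of `u`, any `|u|^β`, `β ≥ 1`, has vanishing (possibly junk) derivative. -/
theorem fderiv_abs_rpow_eq_zero {u : E → ℝ} {y : E} {β : ℝ} (hβ : 1 ≤ β) (h0 : u y = 0) :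
    fderiv ℝ (fun z => |u z| ^ β) y = 0 := by
  by_cases hd : DifferentiableAt ℝ (fun z => |u z| ^ β) y
  · have hmin : IsLocalMin (fun z => |u z| ^ β) y := by
      apply Filter.Eventually.of_forall
      intro z
      simp only [h0, abs_zero, Real.zero_rpow (by linarith : β ≠ 0)]
      positivity
    exact hmin.fderiv_eq_zero
  · exact fderiv_zero_of_not_differentiableAt hd

/-- Pointwise bound on the derivative of `|u|^β`. -/
theorem abs_fderiv_abs_rpow_le {u : E → ℝ} {y : E} (hu : DifferentiableAt ℝ u y)
    {β : ℝ} (hβ : 1 ≤ β) (e : E) :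
    |fderiv ℝ (fun z => |u z| ^ β) y e|
      ≤ β * (1 + |u y|) ^ β * ‖fderiv ℝ u y‖ * ‖e‖ := by
  have hb : (0:ℝ) ≤ 1 + |u y| := by positivity
  have h1b : (1:ℝ) ≤ 1 + |u y| := by simp [abs_nonneg]
  by_cases h0 : u y = 0
  · rw [fderiv_abs_rpow_eq_zero hβ h0]
    simp only [ContinuousLinearMap.zero_apply, abs_zero]
    positivity
  have habs : (0:ℝ) < |u y| := abs_pos.mpr h0
  have key : |u y| ^ (β - 1) ≤ (1 + |u y|) ^ β := by
    calc |u y| ^ (β - 1) ≤ (1 + |u y|) ^ (β - 1) :=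
          Real.rpow_le_rpow habs.le (by linarith) (by linarith)
      _ ≤ (1 + |u y|) ^ β := Real.rpow_le_rpow_of_exponent_le h1b (by linarith)
  have hfe : |fderiv ℝ u y e| ≤ ‖fderiv ℝ u y‖ * ‖e‖ := by
    rw [← Real.norm_eq_abs]
    exact (fderiv ℝ u y).le_opNorm e
  rcases eq_or_lt_of_le hβ with hβ1 | hβ1
  · subst hβ1
    have hd : fderiv ℝ (fun z => |u z| ^ (1:ℝ)) y e
        = (SignType.sign (u y) : ℝ) * fderiv ℝ u y e := by
      have h1 : HasFDerivAt (fun z => |u z| ^ (1:ℝ))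
          ((SignType.sign (u y) : ℝ) • fderiv ℝ u y) y := by
        apply ((hasDerivAt_abs h0).comp_hasFDerivAt y hu.hasFDerivAt).congr_of_eventuallyEq
        filter_upwards with z
        simp [Function.comp, Real.rpow_one]
      rw [h1.fderiv]; rfl
    rw [hd, abs_mul]
    have hs : |(SignType.sign (u y) : ℝ)| ≤ 1 := by
      rcases lt_or_gt_of_ne h0 with h | h
      · simp [sign_neg h]
      · simp [sign_pos h]
    calc |(SignType.sign (u y) : ℝ)| * |fderiv ℝ u y e|
        ≤ 1 * (‖fderiv ℝ u y‖ * ‖e‖) :=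
          mul_le_mul hs hfe (abs_nonneg _) one_pos.le
      _ = ‖fderiv ℝ u y‖ * ‖e‖ := one_mul _
      _ ≤ (1 + |u y|) * (‖fderiv ℝ u y‖ * ‖e‖) :=
          le_mul_of_one_le_left (by positivity) h1b
      _ = 1 * (1 + |u y|) ^ (1:ℝ) * ‖fderiv ℝ u y‖ * ‖e‖ := by
          rw [Real.rpow_one]; ring
  · rw [fderiv_abs_rpow_apply hu hβ1, abs_mul, abs_mul, abs_mul]
    have h2 : |(|u y| ^ (β - 2))| * |u y| = |u y| ^ (β - 1) := by
      rw [abs_of_nonneg (Real.rpow_nonneg (abs_nonneg _) _),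
        show β - 1 = (β - 2) + 1 by ring, Real.rpow_add habs, Real.rpow_one]
    rw [abs_of_pos (by linarith : (0:ℝ) < β), mul_assoc (β), h2]
    calc β * (|u y| ^ (β - 1)) * |fderiv ℝ u y e|
        ≤ β * ((1 + |u y|) ^ β) * (‖fderiv ℝ u y‖ * ‖e‖) := by
          apply mul_le_mul
          · exact mul_le_mul_of_nonneg_left key (by linarith)
          · exact hfe
          · exact abs_nonneg _
          · positivity
      _ = β * (1 + |u y|) ^ β * ‖fderiv ℝ u y‖ * ‖e‖ := by ring

end Pointwise

section Line

open scoped ENNReal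

variable {ι : Type*} [Fintype ι] [DecidableEq ι]

/-- FTC along a coordinate line for a `C¹` compactly supported function. -/
theorem nnnorm_le_lintegral_line {v : (ι → ℝ) → ℝ}
    (hv : ContDiff ℝ 1 v) (h2v : HasCompactSupport v) (x : ι → ℝ) (i : ι) :
    (‖v x‖₊ : ℝ≥0∞) ≤ ∫⁻ t, (‖fderiv ℝ v (update x i t) (Pi.single i 1)‖₊ : ℝ≥0∞) := by
  have hcomp : ContDiff ℝ 1 (v ∘ update x i) :=
    hv.comp (by convert contDiff_update 1 x i)
  have hcs : HasCompactSupport (v ∘ update x i) :=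
    h2v.comp_isClosedEmbedding (isClosedEmbedding_update x i)
  have hder : ∀ t : ℝ, deriv (v ∘ update x i) t
      = fderiv ℝ v (update x i t) (Pi.single i 1) := by
    intro t
    rw [fderiv_comp_deriv _ (hv.differentiable one_ne_zero).differentiableAt
      (hasDerivAt_update x i t).differentiableAt, deriv_update]
  calc (‖v x‖₊ : ℝ≥0∞) = ‖(v ∘ update x i) (x i)‖₊ := by
        rw [Function.comp_apply, update_eq_self]
    _ ≤ ∫⁻ t in Iic (x i), ‖deriv (v ∘ update x i) t‖₊ :=
        HasCompactSupport.enorm_le_lintegral_Ici_deriv hcomp hcs (x i)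
    _ ≤ ∫⁻ t, ‖deriv (v ∘ update x i) t‖₊ :=
        lintegral_mono' Measure.restrict_le_self le_rfl
    _ = ∫⁻ t, (‖fderiv ℝ v (update x i t) (Pi.single i 1)‖₊ : ℝ≥0∞) := by
        simp_rw [hder]

end Line

/-- enorm of `|r|^γ`. -/
theorem ennnorm_abs_rpow (r : ℝ) {γ : ℝ} (hγ : 0 ≤ γ) :
    (‖|r| ^ γ‖₊ : ℝ≥0∞) = (‖r‖₊ : ℝ≥0∞) ^ γ := by
  rw [← enorm_eq_nnnorm, ← enorm_eq_nnnorm, ← ofReal_norm_eq_enorm, ← ofReal_norm_eq_enorm,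
    Real.norm_eq_abs, Real.norm_eq_abs, abs_of_nonneg (Real.rpow_nonneg (abs_nonneg r) γ),
    ← ENNReal.ofReal_rpow_of_nonneg (abs_nonneg r) hγ]

/-- `x ^ (∑ a i) = ∏ x ^ a i` in `ℝ≥0∞` for nonnegative exponents. -/
theorem ENNReal_rpow_sum {ι : Type*} (s : Finset ι) (x : ℝ≥0∞) (a : ι → ℝ)
    (ha : ∀ i ∈ s, 0 ≤ a i) : x ^ (∑ i ∈ s, a i) = ∏ i ∈ s, x ^ a i := by
  classical
  induction s using Finset.induction with
  | empty => simp
  | @insert j s hj ih =>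
    rw [Finset.sum_insert hj, Finset.prod_insert hj,
      ENNReal.rpow_add_of_nonneg _ _ (ha j (Finset.mem_insert_self j s))
        (Finset.sum_nonneg fun i hi => ha i (Finset.mem_insert_of_mem hi)),
      ih (fun i hi => ha i (Finset.mem_insert_of_mem hi))]

open scoped ENNReal NNReal
open Set Function Finset MeasureTheory

/-- Core full-space anisotropic Sobolev inequality, `ℝ≥0∞`-valued. -/
theorem troisi_core (N : ℕ) (hN : 2 < N) (α : Fin N → ℝ) (hα : ∀ i, 1 ≤ α i)
    (u : (Fin N → ℝ) → ℝ) (hu : ContDiff ℝ (⊤ : ℕ∞) u) (h2u : HasCompactSupport u) :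
    (∫⁻ x, (‖u x‖₊ : ℝ≥0∞) ^ (2 * (∑ j, α j) / ((N:ℝ) - 2))) ^ (((N:ℝ)-2)/(2*((N:ℝ)-1)))
      ≤ (∏ i, ENNReal.ofReal ((α i + (∑ j, α j)/((N:ℝ)-2)) / α i)) ^ ((1:ℝ)/((N:ℝ)-1)) *
        ∏ i, (∫⁻ x, (‖fderiv ℝ (fun y => |u y| ^ (α i)) x (Pi.single i 1)‖₊ : ℝ≥0∞) ^ (2:ℝ))
          ^ ((1:ℝ)/(2*((N:ℝ)-1))) := by
  classical
  have hNN : (2:ℝ) < (N:ℝ) := by exact_mod_cast hN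
  have hN2 : (0:ℝ) < (N:ℝ) - 2 := by linarith
  have hN1 : (0:ℝ) < (N:ℝ) - 1 := by linarith
  have hp1 : (0:ℝ) ≤ 1/((N:ℝ)-1) := le_of_lt (div_pos one_pos hN1)
  set A : ℝ := ∑ j, α j with hA_def
  have hA : (N:ℝ) ≤ A := by
    calc (N:ℝ) = ∑ _j : Fin N, (1:ℝ) := by simp
      _ ≤ A := Finset.sum_le_sum fun i _ => hα i
  have hA0 : (0:ℝ) < A := lt_of_lt_of_le (by linarith) hA
  set q : ℝ := 2 * A / ((N:ℝ) - 2) with hq_def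
  have hq0 : 0 < q := div_pos (by linarith) hN2
  set γ : Fin N → ℝ := fun i => α i + A / ((N:ℝ) - 2) with hγ_def
  have hγgt : ∀ i, α i < γ i := fun i => by
    simp only [hγ_def, lt_add_iff_pos_right]
    exact div_pos hA0 hN2
  have hγ1 : ∀ i, 1 < γ i := fun i => lt_of_le_of_lt (hα i) (hγgt i)
  have hγ0 : ∀ i, 0 < γ i := fun i => lt_trans one_pos (hγ1 i)
  have hα0 : ∀ i, 0 < α i := fun i => lt_of_lt_of_le one_pos (hα i)
  have hqhalf : ∀ i, γ i - α i = q / 2 := fun i => by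
    simp only [hγ_def, hq_def]; ring
  have hsumγ : ∑ i, γ i = q * ((N:ℝ) - 1) := by
    simp only [hγ_def, Finset.sum_add_distrib, Finset.sum_const, Finset.card_univ,
      Fintype.card_fin, nsmul_eq_mul, hq_def, ← hA_def]
    field_simp
    ring
  have hu1 : ContDiff ℝ 1 u := hu.of_le (by simp)
  -- the functions v i = |u|^(γ i)
  set v : Fin N → (Fin N → ℝ) → ℝ := fun i y => |u y| ^ γ i with hv_def
  have hv : ∀ i, ContDiff ℝ 1 (v i) := fun i => by
    simpa [Real.norm_eq_abs] using hu1.norm_rpow (hγ1 i)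
  have h2v : ∀ i, HasCompactSupport (v i) := fun i =>
    h2u.comp_left (g := fun s : ℝ => |s| ^ γ i)
      (by simp [Real.zero_rpow (hγ0 i).ne'])
  set f : Fin N → (Fin N → ℝ) → ℝ≥0∞ :=
    fun i y => (‖fderiv ℝ (v i) y (Pi.single i 1)‖₊ : ℝ≥0∞) with hf_def
  have hf : ∀ i, Measurable (f i) := fun i =>
    (measurable_fderiv_apply_const ℝ (v i) (Pi.single i 1)).nnnorm.coe_nnreal_ennreal
  set g : Fin N → (Fin N → ℝ) → ℝ :=
    fun i y => fderiv ℝ (fun z => |u z| ^ α i) y (Pi.single i 1) with hg_def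
  have hgm : ∀ i, Measurable (g i) := fun i =>
    measurable_fderiv_apply_const ℝ _ (Pi.single i 1)
  set X : ℝ≥0∞ := ∫⁻ x, (‖u x‖₊ : ℝ≥0∞) ^ q with hX_def
  set Y : Fin N → ℝ≥0∞ := fun i => ∫⁻ x, (‖g i x‖₊ : ℝ≥0∞) ^ (2:ℝ) with hY_def
  have hum : Measurable fun x => (‖u x‖₊ : ℝ≥0∞) :=
    hu.continuous.measurable.nnnorm.coe_nnreal_ennreal
  -- the pointwise identity
  have hfg : ∀ i y, f i y
      = ENNReal.ofReal (γ i / α i) * ((‖u y‖₊ : ℝ≥0∞) ^ (q/2) * (‖g i y‖₊ : ℝ≥0∞)) := by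
    intro i y
    have hder := fderiv_abs_rpow_factor ((hu.differentiable (by simp)) y) (hα i) (hγgt i)
      (Pi.single i 1)
    have h1 : (0:ℝ) ≤ γ i / α i := le_of_lt (div_pos (hγ0 i) (hα0 i))
    simp only [hf_def, hv_def, hg_def]
    rw [hder, hqhalf i]
    rw [show γ i / α i * |u y| ^ (q/2) * fderiv ℝ (fun z => |u z| ^ α i) y (Pi.single i 1)
        = (γ i / α i) * (|u y| ^ (q/2) * fderiv ℝ (fun z => |u z| ^ α i) y (Pi.single i 1))
      from by ring]
    rw [nnnorm_mul, nnnorm_mul, ENNReal.coe_mul, ENNReal.coe_mul,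
      ← enorm_eq_nnnorm (γ i / α i), Real.enorm_eq_ofReal h1, ennnorm_abs_rpow _ (le_of_lt (half_pos hq0))]
  -- Step 1: Gagliardo
  have hpt : ∀ c : ℝ≥0∞, c ^ q = ∏ i, (c ^ γ i) ^ ((1:ℝ)/((N:ℝ)-1)) := by
    intro c
    have h1 : ∀ i ∈ Finset.univ, (c ^ γ i) ^ ((1:ℝ)/((N:ℝ)-1))
        = c ^ (γ i * ((1:ℝ)/((N:ℝ)-1))) := fun i _ => (ENNReal.rpow_mul _ _ _).symm
    rw [Finset.prod_congr rfl h1,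
      ← ENNReal_rpow_sum Finset.univ c _ (fun i _ => mul_nonneg (hγ0 i).le hp1),
      ← Finset.sum_mul, hsumγ]
    congr 1
    field_simp
  have step1 : X ≤ ∏ i, (∫⁻ y, f i y) ^ ((1:ℝ)/((N:ℝ)-1)) := by
    calc X = ∫⁻ x, ∏ i, ((‖u x‖₊ : ℝ≥0∞) ^ γ i) ^ ((1:ℝ)/((N:ℝ)-1)) := by
          rw [hX_def]
          exact lintegral_congr fun x => hpt _
      _ ≤ ∫⁻ x, ∏ i, (∫⁻ t, f i (update x i t)) ^ ((1:ℝ)/((N:ℝ)-1)) := by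
          apply lintegral_mono
          intro x
          apply Finset.prod_le_prod'
          intro i _
          apply ENNReal.rpow_le_rpow _ hp1
          rw [← ennnorm_abs_rpow (u x) (hγ0 i).le]
          exact nnnorm_le_lintegral_line (hv i) (h2v i) x i
      _ ≤ ∏ i, (∫⁻ y, f i y) ^ ((1:ℝ)/((N:ℝ)-1)) := by
          have hvol : (volume : Measure (Fin N → ℝ)) = Measure.pi fun _ => volume :=
            volume_pi
          rw [hvol]
          have hcard1 : 1 < Fintype.card (Fin N) := by
            simp only [Fintype.card_fin]; omega
          have := gagliardo (μ := fun _ : Fin N => (volume : Measure ℝ)) hcard1 f hf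
          simpa [Fintype.card_fin] using this
  -- Step 2: Cauchy-Schwarz
  have step2 : ∀ i, (∫⁻ y, f i y)
      ≤ ENNReal.ofReal (γ i / α i) * (X ^ ((1:ℝ)/2) * (Y i) ^ ((1:ℝ)/2)) := by
    intro i
    simp_rw [hfg i]
    rw [lintegral_const_mul _ (show Measurable fun y => (‖u y‖₊ : ℝ≥0∞) ^ (q/2) * (‖g i y‖₊ : ℝ≥0∞) from
      (hum.pow_const _).mul ((hgm i).nnnorm.coe_nnreal_ennreal))]
    apply mul_le_mul_right
    have h22 : (2:ℝ).HolderConjugate 2 := Real.HolderConjugate.two_two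
    have hCS := ENNReal.lintegral_mul_le_Lp_mul_Lq volume h22
      (f := fun y => (‖u y‖₊ : ℝ≥0∞) ^ (q/2)) (g := fun y => (‖g i y‖₊ : ℝ≥0∞))
      (hum.pow_const _).aemeasurable ((hgm i).nnnorm.coe_nnreal_ennreal).aemeasurable
    calc ∫⁻ y, (‖u y‖₊ : ℝ≥0∞) ^ (q/2) * (‖g i y‖₊ : ℝ≥0∞)
        ≤ (∫⁻ y, ((‖u y‖₊ : ℝ≥0∞) ^ (q/2)) ^ (2:ℝ)) ^ ((1:ℝ)/2)
          * (∫⁻ y, ((‖g i y‖₊ : ℝ≥0∞)) ^ (2:ℝ)) ^ ((1:ℝ)/2) := hCS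
      _ = X ^ ((1:ℝ)/2) * (Y i) ^ ((1:ℝ)/2) := by
          rw [hX_def, hY_def]
          congr 2
          refine lintegral_congr fun y => ?_
          rw [← ENNReal.rpow_mul]
          congr 1
          field_simp
  -- Step 3: combine
  set K : ℝ≥0∞ := (∏ i, ENNReal.ofReal (γ i / α i)) ^ ((1:ℝ)/((N:ℝ)-1)) with hK_def
  set P : ℝ≥0∞ := ∏ i, (Y i) ^ ((1:ℝ)/(2*((N:ℝ)-1))) with hP_def
  have hmain : X ≤ K * X ^ ((N:ℝ)/(2*((N:ℝ)-1))) * P := by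
    calc X ≤ ∏ i, (∫⁻ y, f i y) ^ ((1:ℝ)/((N:ℝ)-1)) := step1
      _ ≤ ∏ i, (ENNReal.ofReal (γ i / α i) * (X ^ ((1:ℝ)/2) * (Y i) ^ ((1:ℝ)/2)))
            ^ ((1:ℝ)/((N:ℝ)-1)) := by
          apply Finset.prod_le_prod'
          intro i _
          exact ENNReal.rpow_le_rpow (step2 i) hp1
      _ = K * X ^ ((N:ℝ)/(2*((N:ℝ)-1))) * P := by
          simp_rw [ENNReal.mul_rpow_of_nonneg _ _ hp1]
          rw [Finset.prod_mul_distrib, Finset.prod_mul_distrib]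
          have e1 : (∏ i : Fin N, (ENNReal.ofReal (γ i / α i)) ^ ((1:ℝ)/((N:ℝ)-1))) = K := by
            rw [hK_def, ENNReal.prod_rpow_of_nonneg hp1]
          have e2 : (∏ _i : Fin N, (X ^ ((1:ℝ)/2)) ^ ((1:ℝ)/((N:ℝ)-1)))
              = X ^ ((N:ℝ)/(2*((N:ℝ)-1))) := by
            rw [Finset.prod_const, Finset.card_univ, Fintype.card_fin, ← ENNReal.rpow_natCast,
              ← ENNReal.rpow_mul, ← ENNReal.rpow_mul]
            congr 1
            field_simp
            try ring
          have e3 : (∏ i : Fin N, (Y i ^ ((1:ℝ)/2)) ^ ((1:ℝ)/((N:ℝ)-1))) = P := by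
            rw [hP_def]
            refine Finset.prod_congr rfl fun i _ => ?_
            rw [← ENNReal.rpow_mul]
            congr 1
            field_simp
          rw [e1, e2, e3]
          ring
  -- Finiteness of X
  have hXfin : X ≠ ∞ := by
    have hcont : Continuous fun x => |u x| ^ q :=
      (hu.continuous.abs).rpow_const (fun x => Or.inr hq0.le)
    have hcs2 : HasCompactSupport fun x => |u x| ^ q :=
      h2u.comp_left (g := fun s : ℝ => |s| ^ q) (by simp [Real.zero_rpow hq0.ne'])
    have hint : Integrable (fun x => |u x| ^ q) volume :=
      hcont.integrable_of_hasCompactSupport hcs2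
    have hfin := (hasFiniteIntegral_def _ _).mp hint.hasFiniteIntegral
    have hXeq : X = ∫⁻ x, (‖|u x| ^ q‖₊ : ℝ≥0∞) := by
      rw [hX_def]
      exact lintegral_congr fun x => (ennnorm_abs_rpow (u x) hq0.le).symm
    rw [hXeq]
    exact hfin.ne
  -- Conclusion
  show X ^ (((N:ℝ)-2)/(2*((N:ℝ)-1))) ≤ K * P
  by_cases hX0 : X = 0
  · rw [hX0, ENNReal.zero_rpow_of_pos (div_pos hN2 (by linarith))]
    exact zero_le
  · have hθ : ((N:ℝ)-2)/(2*((N:ℝ)-1)) = 1 + (-((N:ℝ)/(2*((N:ℝ)-1)))) := by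
      field_simp
      ring
    calc X ^ (((N:ℝ)-2)/(2*((N:ℝ)-1)))
        = X * X ^ (-((N:ℝ)/(2*((N:ℝ)-1)))) := by
          rw [hθ, ENNReal.rpow_add _ _ hX0 hXfin, ENNReal.rpow_one]
      _ ≤ (K * X ^ ((N:ℝ)/(2*((N:ℝ)-1))) * P) * X ^ (-((N:ℝ)/(2*((N:ℝ)-1)))) :=
          mul_le_mul_left hmain _
      _ = (K * P) * (X ^ ((N:ℝ)/(2*((N:ℝ)-1))) * X ^ (-((N:ℝ)/(2*((N:ℝ)-1))))) := by
          ring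
      _ = K * P := by
          rw [← ENNReal.rpow_add _ _ hX0 hXfin]
          simp

/-- **Anisotropic Sobolev–Troisi embedding** (Proposition 2.1 of the paper, L² case).
Let `N > 2`, let `α_i ≥ 1` with sum `A`, and set `2*_α = (2N/(N−2)) · (A/N)`.
There is a constant `C > 0`, depending only on `N` and `A`, such that for every
rectangular domain `Ω = ∏_i (a_i, b_i)` and every smooth compactly supported
function `u` with support in `Ω`,
`(∫_Ω |u|^{2*_α})^{1/2*_α} ≤ C ∏_i (∫_Ω |∂_{x_i}(|u|^{α_i})|²)^{1/(2A)}`. -/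
theorem anisotropic_sobolev_troisi (N : ℕ) (hN : 2 < N)
    (α : Fin N → ℝ) (hα : ∀ i, 1 ≤ α i) :
    ∃ C : ℝ, 0 < C ∧
      ∀ a b : Fin N → ℝ, ∀ u : (Fin N → ℝ) → ℝ,
        ContDiff ℝ (⊤ : ℕ∞) u → HasCompactSupport u →
        tsupport u ⊆ Set.univ.pi (fun i => Ioo (a i) (b i)) →
        (∫ x in Set.univ.pi (fun i => Ioo (a i) (b i)),
            |u x| ^ (2 * (N : ℝ) / ((N : ℝ) - 2) * ((∑ j, α j) / (N : ℝ)))) ^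
          (1 / (2 * (N : ℝ) / ((N : ℝ) - 2) * ((∑ j, α j) / (N : ℝ)))) ≤
        C * ∏ i, (∫ x in Set.univ.pi (fun i => Ioo (a i) (b i)),
            (fderiv ℝ (fun y => |u y| ^ (α i)) x (Pi.single i 1)) ^ 2) ^
          (1 / (2 * ∑ j, α j)) := by
  classical
  have hNN : (2:ℝ) < (N:ℝ) := by exact_mod_cast hN
  have hN2 : (0:ℝ) < (N:ℝ) - 2 := by linarith
  have hN1 : (0:ℝ) < (N:ℝ) - 1 := by linarith
  have hN0 : (0:ℝ) < (N:ℝ) := by linarith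
  have hp1 : (0:ℝ) ≤ 1/((N:ℝ)-1) := le_of_lt (div_pos one_pos hN1)
  set A : ℝ := ∑ j, α j with hA_def
  have hA : (N:ℝ) ≤ A := by
    calc (N:ℝ) = ∑ _j : Fin N, (1:ℝ) := by simp
      _ ≤ A := Finset.sum_le_sum fun i _ => hα i
  have hA0 : (0:ℝ) < A := by linarith
  set q : ℝ := 2 * A / ((N:ℝ) - 2) with hq_def
  have hq0 : 0 < q := div_pos (by linarith) hN2
  have hpexp : 2 * (N:ℝ) / ((N:ℝ) - 2) * (A / (N:ℝ)) = q := by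
    rw [hq_def]; field_simp
  set s : ℝ := ((N:ℝ)-1)/A with hs_def
  have hs0 : (0:ℝ) ≤ s := le_of_lt (div_pos hN1 hA0)
  set K : ℝ≥0∞ := (∏ i, ENNReal.ofReal ((α i + A/((N:ℝ)-2)) / α i)) ^ ((1:ℝ)/((N:ℝ)-1))
    with hK_def
  have hKfin : K ≠ ∞ := by
    rw [hK_def]
    exact ENNReal.rpow_ne_top_of_nonneg hp1
      (ENNReal.prod_lt_top fun i _ => ENNReal.ofReal_lt_top).ne
  have hKsfin : K ^ s ≠ ∞ := ENNReal.rpow_ne_top_of_nonneg hs0 hKfin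
  refine ⟨max 1 ((K ^ s).toReal), lt_of_lt_of_le one_pos (le_max_left _ _), ?_⟩
  intro a b u hu h2u hsupp
  set Ω : Set (Fin N → ℝ) := Set.univ.pi (fun i => Ioo (a i) (b i)) with hΩ_def
  have hU : ∀ x, x ∉ Ω → u x = 0 := fun x hx =>
    image_eq_zero_of_notMem_tsupport fun h => hx (hsupp h)
  set g : Fin N → (Fin N → ℝ) → ℝ :=
    fun i y => fderiv ℝ (fun z => |u z| ^ α i) y (Pi.single i 1) with hg_def
  have hgm : ∀ i, Measurable (g i) := fun i =>
    measurable_fderiv_apply_const ℝ _ (Pi.single i 1)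
  set X : ℝ≥0∞ := ∫⁻ x, (‖u x‖₊ : ℝ≥0∞) ^ q with hX_def
  set Y : Fin N → ℝ≥0∞ := fun i => ∫⁻ x, (‖g i x‖₊ : ℝ≥0∞) ^ (2:ℝ) with hY_def
  -- set integrals to full integrals
  have hL : (∫ x in Ω, |u x| ^ (2 * (N:ℝ) / ((N:ℝ) - 2) * (A / (N:ℝ))))
      = ∫ x, |u x| ^ q := by
    rw [hpexp]
    apply setIntegral_eq_integral_of_forall_compl_eq_zero
    intro x hx
    rw [hU x hx]
    simp [Real.zero_rpow hq0.ne']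
  have hR : ∀ i, (∫ x in Ω, (g i x) ^ 2) = ∫ x, (g i x) ^ 2 := by
    intro i
    apply setIntegral_eq_integral_of_forall_compl_eq_zero
    intro x hx
    have h0 : g i x = 0 := by
      rw [hg_def]
      simp only
      rw [fderiv_abs_rpow_eq_zero (hα i) (hU x hx)]
      rfl
    rw [h0]
    norm_num
  -- conversion of real integrals to lintegrals
  have hsq : ∀ r : ℝ, ENNReal.ofReal (r ^ 2) = (‖r‖₊ : ℝ≥0∞) ^ (2:ℝ) := by
    intro r
    rw [← sq_abs, ENNReal.ofReal_pow (abs_nonneg r),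
      ← Real.enorm_eq_ofReal (abs_nonneg r), enorm_eq_nnnorm, Real.nnnorm_abs, ← ENNReal.rpow_natCast]
    norm_num
  have hXr : (∫ x, |u x| ^ q) = X.toReal := by
    rw [integral_eq_lintegral_of_nonneg_ae
      (Filter.Eventually.of_forall fun x => Real.rpow_nonneg (abs_nonneg _) _)
      ((hu.continuous.abs.rpow_const fun x => Or.inr hq0.le).aestronglyMeasurable)]
    rw [hX_def]
    congr 1
    refine lintegral_congr fun x => ?_
    rw [← ennnorm_abs_rpow (u x) hq0.le, ← enorm_eq_nnnorm, Real.enorm_eq_ofReal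
      (Real.rpow_nonneg (abs_nonneg _) _)]
  have hYr : ∀ i, (∫ x, (g i x) ^ 2) = (Y i).toReal := by
    intro i
    rw [integral_eq_lintegral_of_nonneg_ae
      (Filter.Eventually.of_forall fun x => sq_nonneg _)
      ((hgm i).pow_const 2).aestronglyMeasurable]
    rw [hY_def]
    congr 1
    exact lintegral_congr fun x => hsq _
  -- finiteness of Y
  have hYfin : ∀ i, Y i ≠ ∞ := by
    intro i
    set B : (Fin N → ℝ) → ℝ := fun y => α i * (1 + |u y|) ^ α i * ‖fderiv ℝ u y‖ with hB_def
    have hBc : Continuous B := by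
      apply Continuous.mul
      · apply continuous_const.mul
        exact (continuous_const.add hu.continuous.abs).rpow_const
          fun x => Or.inl (by positivity : (1:ℝ) + |u x| ≠ 0)
      · exact (hu.continuous_fderiv (by simp)).norm
    have hBcs : HasCompactSupport B := by
      apply HasCompactSupport.mul_left
      exact (h2u.fderiv (𝕜 := ℝ)).comp_left (g := fun L : (Fin N → ℝ) →L[ℝ] ℝ => ‖L‖)
        norm_zero
    have hgB : ∀ y, |g i y| ≤ B y := by
      intro y
      have h := abs_fderiv_abs_rpow_le (hu.differentiable (by simp) y) (hα i) (Pi.single i 1)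
      rwa [Pi.norm_single, norm_one, mul_one] at h
    have hB2cs : HasCompactSupport fun y => (B y) ^ 2 :=
      hBcs.comp_left (g := fun t : ℝ => t ^ 2) (by norm_num)
    have hB2int : Integrable (fun y => (B y) ^ 2) volume :=
      (hBc.pow 2).integrable_of_hasCompactSupport hB2cs
    have hfin := (hasFiniteIntegral_iff_ofReal
      (Filter.Eventually.of_forall fun y => sq_nonneg (B y))).mp hB2int.hasFiniteIntegral
    refine ne_of_lt (lt_of_le_of_lt ?_ hfin)
    rw [hY_def]
    apply lintegral_mono
    intro y
    show ((‖g i y‖₊ : ℝ≥0∞)) ^ (2:ℝ) ≤ ENNReal.ofReal ((B y) ^ 2)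
    rw [← hsq]
    apply ENNReal.ofReal_le_ofReal
    calc (g i y) ^ 2 = |g i y| ^ 2 := (sq_abs _).symm
      _ ≤ (B y) ^ 2 := pow_le_pow_left₀ (abs_nonneg _) (hgB y) 2
  -- the core inequality
  have core := troisi_core N hN α hα u hu h2u
  rw [← hA_def, ← hq_def, ← hX_def] at core
  have core2 : X ^ ((1:ℝ)/q) ≤ K ^ s * ∏ i, (Y i) ^ (1/(2*A)) := by
    have h := ENNReal.rpow_le_rpow core hs0
    rw [← ENNReal.rpow_mul] at h
    have he : ((N:ℝ)-2)/(2*((N:ℝ)-1)) * s = 1/q := by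
      rw [hs_def, hq_def]; field_simp
    rw [he, ENNReal.mul_rpow_of_nonneg _ _ hs0, ← hK_def] at h
    refine le_trans h (mul_le_mul_right (le_of_eq ?_) _)
    rw [← ENNReal.prod_rpow_of_nonneg hs0]
    refine Finset.prod_congr rfl fun i _ => ?_
    rw [← ENNReal.rpow_mul]
    have hee : (1:ℝ)/(2*((N:ℝ)-1)) * s = 1/(2*A) := by
      rw [hs_def]; field_simp
    rw [hee]
  -- final assembly
  rw [hL, hXr, Finset.prod_congr rfl (fun i (_ : i ∈ Finset.univ) => by rw [hR i, hYr i]),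
    hpexp]
  calc (X.toReal) ^ (1/q)
      = (X ^ ((1:ℝ)/q)).toReal := ENNReal.toReal_rpow _ _
    _ ≤ (K ^ s * ∏ i, (Y i) ^ (1/(2*A))).toReal := by
        apply ENNReal.toReal_mono _ core2
        exact ENNReal.mul_ne_top hKsfin
          (ENNReal.prod_lt_top fun i _ =>
            ENNReal.rpow_lt_top_of_nonneg (by positivity) (hYfin i)).ne
    _ = (K ^ s).toReal * ∏ i, ((Y i) ^ (1/(2*A))).toReal := by
        rw [ENNReal.toReal_mul, ENNReal.toReal_prod]
    _ = (K ^ s).toReal * ∏ i, ((Y i).toReal) ^ (1/(2*A)) := by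
        simp_rw [ENNReal.toReal_rpow]
    _ ≤ (max 1 ((K ^ s).toReal)) * ∏ i, ((Y i).toReal) ^ (1/(2*A)) := by
        apply mul_le_mul_of_nonneg_right (le_max_right _ _)
        exact Finset.prod_nonneg fun i _ => Real.rpow_nonneg ENNReal.toReal_nonneg _
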